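/- Let d ≥ 2 be even. Then the affine hull of P_{∂σ_{d+1}} = conv(columns of L), where L_{ii} = d+1 and L_{ij} = (-1)^{i+j-1} for i ≠ j, equals { x ∈ ℝ^{d+2} : Σ_{k odd} x_k = Σ_{k even} x_k = (d+2)/2 }. -/

import Mathlib

/-!
With `s = ((-1)^k)ₖ` the alternating sign vector, `lap d = (d+2) • 1 - s sᵀ`. Because `d+2` is
even, `s` is orthogonal to the all-ones vector and `s ⬝ᵥ s = d+2`; hence every column of `lap d`
has coordinate sum `d+2` and is orthogonal to `s`, and conversely any such `x` equals
`lap d *ᵥ (x / (d+2))`, an affine combination of the columns. In the statement, the two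
conditions `∑_{k odd} x_k = ∑_{k even} x_k = (d+2)/2` are exactly `∑ x = d+2` and `s ⬝ᵥ x = 0`.
-/

open Matrix

/-- The `d`-th Laplacian matrix of the boundary of the `(d+1)`-simplex:
`L_{ii} = d+1` and `L_{ij} = (-1)^{i+j-1}` for `i ≠ j` (1-indexed; here 0-indexed,
so the sign is `(-1)^{i+j+1}`). -/
def lap (d : ℕ) : Matrix (Fin (d+2)) (Fin (d+2)) ℝ :=
  Matrix.of fun i j => if i = j then (d+1 : ℝ) else (-1 : ℝ)^((i:ℕ)+(j:ℕ)+1)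

open Finset

namespace Matrix

variable {K m n : Type*}

theorem mem_affineSpan_range_transpose_iff [CommRing K] [Nontrivial K] [Fintype n]
    (M : Matrix m n K) (x : m → K) :
    x ∈ affineSpan K (Set.range Mᵀ) ↔ ∃ w : n → K, ∑ j, w j = 1 ∧ M *ᵥ w = x := by
  have combination_eq {w : n → K} (hw : ∑ j, w j = 1) :
      univ.affineCombination K (Mᵀ : n → m → K) w = M *ᵥ w := by
    rw [univ.affineCombination_eq_linear_combination (Mᵀ : n → m → K) w hw, mulVec_eq_sum]
    simp only [op_smul_eq_smul]
  constructor
  · intro hx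
    obtain ⟨w, hw, rfl⟩ := eq_affineCombination_of_mem_affineSpan_of_fintype hx
    exact ⟨w, hw, (combination_eq hw).symm⟩
  · rintro ⟨w, hw, rfl⟩
    exact combination_eq hw ▸ affineCombination_mem_affineSpan hw _

theorem smul_one_sub_vecMulVec_mulVec [CommRing K] [Fintype n] [DecidableEq n]
    (c : K) (s w : n → K) :
    (c • 1 - vecMulVec s s) *ᵥ w = c • w - (s ⬝ᵥ w) • s := by
  rw [sub_mulVec, smul_mulVec, one_mulVec, vecMulVec_mulVec, op_smul_eq_smul]

theorem affineSpan_range_transpose_smul_one_sub_vecMulVec [Field K] [Fintype n]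
    [DecidableEq n] {c : K} {s : n → K} (hc : c ≠ 0) (hss : s ⬝ᵥ s = c) (hs : ∑ i, s i = 0) :
    (affineSpan K (Set.range (c • 1 - vecMulVec s s)ᵀ) : Set (n → K)) =
      {x | ∑ i, x i = c ∧ s ⬝ᵥ x = 0} := by
  ext x
  rw [SetLike.mem_coe, mem_affineSpan_range_transpose_iff, Set.mem_ofPred_eq]
  simp only [smul_one_sub_vecMulVec_mulVec]
  constructor
  · rintro ⟨w, hw, rfl⟩
    simp only [Pi.sub_apply, Pi.smul_apply, smul_eq_mul, sum_sub_distrib, ← mul_sum, hw, hs,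
      dotProduct_sub, dotProduct_smul, hss]
    constructor <;> ring
  · rintro ⟨hx, hsx⟩
    refine ⟨c⁻¹ • x, ?_, ?_⟩
    · simp only [Pi.smul_apply, smul_eq_mul, ← mul_sum, hx, inv_mul_cancel₀ hc]
    · rw [dotProduct_smul, hsx, smul_zero, zero_smul, sub_zero, smul_inv_smul₀ hc]

end Matrix

theorem sum_eq_sum_filter_odd_add_sum_filter_even {M : Type*} [AddCommMonoid M] {n : ℕ}
    (x : Fin n → M) :
    ∑ k, x k = ∑ k ∈ univ.filter fun k : Fin n => Odd ((k : ℕ) + 1), x k +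
      ∑ k ∈ univ.filter fun k : Fin n => Even ((k : ℕ) + 1), x k := by
  simp_rw [← Nat.not_odd_iff_even]
  exact (sum_filter_add_sum_filter_not _ _ _).symm

section altSign

variable (R : Type*) [CommRing R]

def altSign (n : ℕ) : Fin n → R := fun k => (-1) ^ (k : ℕ)

variable {R}

theorem altSign_dotProduct_self (n : ℕ) : altSign R n ⬝ᵥ altSign R n = n := by
  simp [dotProduct, altSign, ← pow_add, ← two_mul, pow_mul]

theorem sum_altSign_of_even {n : ℕ} (hn : Even n) : ∑ k, altSign R n k = 0 := by
  simp only [altSign]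
  rw [Fin.sum_univ_eq_sum_range (fun k => (-1 : R) ^ k), neg_one_geom_sum, if_pos hn]

theorem altSign_dotProduct {n : ℕ} (x : Fin n → R) :
    altSign R n ⬝ᵥ x = ∑ k ∈ univ.filter fun k : Fin n => Odd ((k : ℕ) + 1), x k -
      ∑ k ∈ univ.filter fun k : Fin n => Even ((k : ℕ) + 1), x k := by
  have h_odd : ∀ k ∈ univ.filter fun k : Fin n => Odd ((k : ℕ) + 1),
      altSign R n k * x k = x k := by
    intro k hk
    rw [mem_filter, Nat.odd_add_one, Nat.not_odd_iff_even] at hk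
    rw [altSign, hk.2.neg_one_pow, one_mul]
  have h_even : ∀ k ∈ univ.filter fun k : Fin n => Even ((k : ℕ) + 1),
      altSign R n k * x k = -x k := by
    intro k hk
    rw [mem_filter, Nat.even_add_one, Nat.not_even_iff_odd] at hk
    rw [altSign, hk.2.neg_one_pow, neg_one_mul]
  rw [dotProduct, sum_eq_sum_filter_odd_add_sum_filter_even, sum_congr rfl h_odd,
    sum_congr rfl h_even, sum_neg_distrib, sub_eq_add_neg]

end altSign

theorem lap_eq_smul_one_sub_vecMulVec_altSign (d : ℕ) :
    lap d = ((d : ℝ) + 2) • 1 - vecMulVec (altSign ℝ (d + 2)) (altSign ℝ (d + 2)) := by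
  ext i j
  rcases eq_or_ne i j with rfl | hij
  · simp only [lap, of_apply, ↓reduceIte, Matrix.sub_apply, Matrix.smul_apply, one_apply_eq,
      smul_eq_mul, mul_one, vecMulVec_apply, altSign, ← mul_pow, mul_neg, neg_neg, one_pow]
    ring
  · simp [lap, altSign, vecMulVec_apply, hij, pow_succ, pow_add]

theorem stmt10_general (d : ℕ) (he : Even d) :
    (affineSpan ℝ (Set.range (lap d)ᵀ) : Set (Fin (d+2) → ℝ)) =
      {x | (∑ k ∈ Finset.univ.filter fun k : Fin (d+2) => Odd ((k:ℕ)+1), x k)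
             = (d+2 : ℝ)/2 ∧
           (∑ k ∈ Finset.univ.filter fun k : Fin (d+2) => Even ((k:ℕ)+1), x k)
             = (d+2 : ℝ)/2} := by
  rw [lap_eq_smul_one_sub_vecMulVec_altSign,
    affineSpan_range_transpose_smul_one_sub_vecMulVec (by positivity)
      (by rw [altSign_dotProduct_self]; push_cast; ring) (sum_altSign_of_even (he.add even_two))]
  ext x
  simp only [Set.mem_ofPred_eq, sum_eq_sum_filter_odd_add_sum_filter_even, altSign_dotProduct]
  constructor <;> rintro ⟨h₁, h₂⟩ <;> constructor <;> linarith

/-- for even `d ≥ 2`, the affine hull of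
`P_{∂σ_{d+1}} = conv(columns of L)` equals
`{x ∈ ℝ^{d+2} : Σ_{k odd} x_k = Σ_{k even} x_k = (d+2)/2}`, indices `k` 1-indexed,
i.e. `k = (k:ℕ)+1` below. -/
theorem stmt10 (d : ℕ) (hd : 2 ≤ d) (he : Even d) :
    (affineSpan ℝ (Set.range (lap d)ᵀ) : Set (Fin (d+2) → ℝ)) =
      {x | (∑ k ∈ Finset.univ.filter fun k : Fin (d+2) => Odd ((k:ℕ)+1), x k)
             = (d+2 : ℝ)/2 ∧
           (∑ k ∈ Finset.univ.filter fun k : Fin (d+2) => Even ((k:ℕ)+1), x k)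
             = (d+2 : ℝ)/2} :=
  stmt10_general d he
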